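/- Let G = A₅ be the alternating group on five letters and H a subgroup of order 5. Then there is exactly one proper subgroup of A₅ strictly containing H, namely its normalizer, which has order 10. In particular A₅ does not satisfy the 2-valency condition. -/

import Mathlib

/-- The intersection graph of a group `G`: vertices are the proper non-trivial
subgroups, with an edge between two distinct subgroups whose intersection is
non-trivial. -/
def interGraph (G : Type*) [Group G] :
    SimpleGraph {H : Subgroup G // H ≠ ⊥ ∧ H ≠ ⊤} where
  Adj A B := A ≠ B ∧ A.1 ⊓ B.1 ≠ ⊥
  symm := ⟨by
    rintro A B ⟨h1, h2⟩
    exact ⟨h1.symm, by rwa [inf_comm]⟩⟩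
  loopless := ⟨by rintro A ⟨h1, _⟩; exact h1 rfl⟩

/-- `S` is a separating set of `Γ`: after removing the vertices of `S`, some
two remaining vertices are not joined by a path. -/
def IsSepSet {V : Type*} (Γ : SimpleGraph V) (S : Set V) : Prop :=
  ∃ a b : ↥(Sᶜ), ¬ (Γ.induce Sᶜ).Reachable a b

/-- A graph is `k`-connected if it has more than `k` vertices and no
separating set of cardinality `< k`. -/
def KConnected {V : Type*} (Γ : SimpleGraph V) (k : ℕ) : Prop :=
  k < Nat.card V ∧ ∀ S : Set V, IsSepSet Γ S → k ≤ Nat.card S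

/-- A minimal subgroup: a minimal element of the poset of non-trivial subgroups. -/
def IsMinimalSubgroup {G : Type*} [Group G] (A : Subgroup G) : Prop :=
  A ≠ ⊥ ∧ ∀ K : Subgroup G, K ≠ ⊥ → K ≤ A → K = A

/-- There exist (at least) `k` pairwise internally independent paths from `u` to `v`. -/
def HasIndepPaths {V : Type*} (Γ : SimpleGraph V) (u v : V) (k : ℕ) : Prop :=
  ∃ p : Fin k → Γ.Walk u v, (∀ i, (p i).IsPath) ∧
    ∀ i j, i ≠ j → ∀ x ∈ (p i).support, x ∈ (p j).support → x = u ∨ x = v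

/-- A finite group is supersolvable if it has a normal series (all terms normal
in the whole group) whose successive factors are of prime order. -/
def IsSupersolvable (G : Type*) [Group G] : Prop :=
  ∃ (n : ℕ) (s : Fin (n + 1) → Subgroup G), s 0 = ⊥ ∧ s (Fin.last n) = ⊤ ∧
    (∀ i, (s i).Normal) ∧
    ∀ i : Fin n, s i.castSucc ≤ s i.succ ∧ ((s i.castSucc).relIndex (s i.succ)).Prime

/-!
Since `A₅` is simple of order `60`, a proper subgroup `K` acts faithfully on `A₅ ⧸ K`, so
`60 ∣ [A₅ : K]!` and `[A₅ : K] ≥ 5`. A subgroup `H` of order `5` has index `12`, so a proper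
subgroup containing it has index `6` or `12`. The normalizer of `H` has index `n₅ ≡ 1 [MOD 5]`
by Sylow's theorem, hence index `6`. A subgroup `K` with `H < K < A₅` has index `6`, so `H` has
index `2` in `K`, is normal in `K`, and `K` lies in (hence equals) the normalizer.
-/

open Subgroup

namespace Subgroup

variable {G : Type*} [Group G]

theorem eq_of_le_of_index_eq {H K : Subgroup G} (hHK : H ≤ K) (hH : H.index ≠ 0)
    (h : K.index = H.index) : H = K := by
  refine le_antisymm hHK (relIndex_eq_one.mp ?_)
  have hmul := relIndex_mul_index hHK
  rw [h] at hmul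
  exact (Nat.mul_eq_right hH).mp hmul

theorem le_normalizer_of_relIndex_eq_two {H K : Subgroup G} (hHK : H ≤ K)
    (h : H.relIndex K = 2) : K ≤ normalizer (H : Set G) :=
  have := normal_of_index_eq_two h
  le_normalizer_of_normal_subgroupOf hHK

theorem index_normalizer_modEq_one_of_card_eq_prime [Finite G] {p : ℕ} [Fact p.Prime]
    {H : Subgroup G} (hH : Nat.card H = p) (hp : ¬ p ∣ H.index) :
    (normalizer (H : Set G)).index ≡ 1 [MOD p] := by
  let P : Sylow p G := (IsPGroup.of_card (n := 1) (by rw [hH, pow_one])).toSylow hp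
  exact P.card_eq_index_normalizer ▸ card_sylow_modEq_one p G

end Subgroup

theorem IsSimpleGroup.card_dvd_factorial_index {G : Type*} [Group G] [Finite G] [IsSimpleGroup G]
    {H : Subgroup G} (hH : H ≠ ⊤) : Nat.card G ∣ H.index.factorial := by
  have hcore : H.normalCore = ⊥ :=
    (eq_bot_or_eq_top_of_normal _ H.normalCore_normal).resolve_right
      fun h ↦ hH (top_le_iff.mp (h ▸ H.normalCore_le))
  rw [← index_bot, ← hcore, normalCore_eq_ker, index_ker, index_eq_card, ← Nat.card_perm]
  exact card_subgroup_dvd_card _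

theorem isMinimalSubgroup_of_card_prime {G : Type*} [Group G] {A : Subgroup G}
    (hA : (Nat.card A).Prime) : IsMinimalSubgroup A := by
  have : Finite A := Nat.finite_of_card_ne_zero hA.ne_zero
  refine ⟨fun h ↦ hA.ne_one (h ▸ card_bot), fun K hK hKA ↦ ?_⟩
  rcases (Nat.dvd_prime hA).mp (card_dvd_of_le hKA) with h | h
  · exact absurd (card_eq_one.mp h) hK
  · exact eq_of_le_of_card_ge hKA h.ge

local notation "A₅" => alternatingGroup (Fin 5)

namespace alternatingGroup

theorem card_fin_five : Nat.card A₅ = 60 := by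
  rw [nat_card_alternatingGroup, Nat.card_fin]
  rfl

theorem five_le_index_of_ne_top {K : Subgroup A₅} (hK : K ≠ ⊤) : 5 ≤ K.index := by
  have h := IsSimpleGroup.card_dvd_factorial_index hK
  rw [card_fin_five] at h
  exact (Nat.prime_five.dvd_factorial).mp (dvd_trans (by norm_num) h)

section OrderFive

variable {H : Subgroup A₅} (hH : Nat.card H = 5)
include hH

theorem index_eq_twelve_of_card_eq_five : H.index = 12 := by
  have := index_mul_card H
  rw [hH, card_fin_five] at this
  omega

theorem index_eq_six_or_twelve_of_le {K : Subgroup A₅} (hHK : H ≤ K) (hK : K ≠ ⊤) :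
    K.index = 6 ∨ K.index = 12 := by
  have hdvd := index_dvd_of_le hHK
  rw [index_eq_twelve_of_card_eq_five hH] at hdvd
  have h5 := five_le_index_of_ne_top hK
  have h12 := Nat.le_of_dvd (by norm_num) hdvd
  interval_cases K.index <;> omega

theorem index_normalizer_eq_six : (normalizer (H : Set A₅)).index = 6 := by
  have hnormal : ¬ H.Normal := fun hn ↦ by
    rcases IsSimpleGroup.eq_bot_or_eq_top_of_normal H hn with h | h
    · rw [h, card_bot] at hH; omega
    · rw [h, card_top, card_fin_five] at hH; omega
  have : Fact (Nat.Prime 5) := ⟨Nat.prime_five⟩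
  have hmod := index_normalizer_modEq_one_of_card_eq_prime hH
    (by rw [index_eq_twelve_of_card_eq_five hH]; norm_num)
  rcases index_eq_six_or_twelve_of_le hH le_normalizer
    (mt normalizer_eq_top_iff.mp hnormal) with h | h
  · exact h
  · rw [h] at hmod
    exact absurd hmod (by decide)

theorem eq_normalizer_of_lt_of_ne_top {K : Subgroup A₅} (hHK : H < K) (hK : K ≠ ⊤) :
    K = normalizer (H : Set A₅) := by
  have h12 := index_eq_twelve_of_card_eq_five hH
  have hK6 : K.index = 6 := (index_eq_six_or_twelve_of_le hH hHK.le hK).resolve_right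
    fun h ↦ hHK.ne (eq_of_le_of_index_eq hHK.le (by omega) (h.trans h12.symm))
  have hrel : H.relIndex K = 2 := by
    have := relIndex_mul_index hHK.le
    rw [hK6, h12] at this
    omega
  exact eq_of_le_of_index_eq (le_normalizer_of_relIndex_eq_two hHK.le hrel) (by omega)
    ((index_normalizer_eq_six hH).trans hK6.symm)

end OrderFive

end alternatingGroup

open alternatingGroup

theorem stmt14 (H : Subgroup (alternatingGroup (Fin 5))) (hH : Nat.card H = 5) :
    H < Subgroup.normalizer (H : Set (alternatingGroup (Fin 5))) ∧ Subgroup.normalizer (H : Set (alternatingGroup (Fin 5))) ≠ ⊤ ∧ Nat.card (Subgroup.normalizer (H : Set (alternatingGroup (Fin 5)))) = 10 ∧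
    (∀ K : Subgroup (alternatingGroup (Fin 5)), H < K → K ≠ ⊤ → K = Subgroup.normalizer (H : Set (alternatingGroup (Fin 5)))) ∧
    ¬ (∀ A : Subgroup (alternatingGroup (Fin 5)), IsMinimalSubgroup A →
        2 ≤ Nat.card {K : Subgroup (alternatingGroup (Fin 5)) // A < K ∧ K ≠ ⊤}) := by
  have h6 := index_normalizer_eq_six hH
  have h12 := index_eq_twelve_of_card_eq_five hH
  have hcard := index_mul_card (normalizer (H : Set A₅))
  rw [h6, card_fin_five] at hcard
  have hlt : H < normalizer (H : Set A₅) := lt_of_le_of_ne le_normalizer fun h ↦ by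
    rw [← h] at h6
    omega
  have hne : normalizer (H : Set A₅) ≠ ⊤ := fun h ↦ by
    rw [h, index_top] at h6
    omega
  have huniq : ∀ K : Subgroup A₅, H < K → K ≠ ⊤ → K = normalizer (H : Set A₅) :=
    fun _ ↦ eq_normalizer_of_lt_of_ne_top hH
  refine ⟨hlt, hne, by omega, huniq, fun h2 ↦ ?_⟩
  have hsub : Subsingleton {K : Subgroup A₅ // H < K ∧ K ≠ ⊤} :=
    ⟨fun a b ↦ Subtype.ext ((huniq _ a.2.1 a.2.2).trans (huniq _ b.2.1 b.2.2).symm)⟩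
  have := h2 H (isMinimalSubgroup_of_card_prime (hH.symm ▸ Nat.prime_five))
  rw [Nat.card_of_subsingleton ⟨normalizer (H : Set A₅), hlt, hne⟩] at this
  omega
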